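/- arXiv:2012.05514 — 2 statements merged into one kernel-verified Lean document; each statement's English description precedes it below -/
import Mathlib

section
/- Let λ > 0, let B ∈ ℝ^{n×k}, U ∈ ℝ^{n×m}, and R ∈ ℝ^{m×m} symmetric positive definite satisfy B Bᵀ = λ U R⁻¹ Uᵀ. Let ψ : ℝ^n → ℝ be C² and positive, and set J = -λ log ψ. Then -(1/2)(∂ₓJ)ᵀ U R⁻¹ Uᵀ (∂ₓJ) + (1/2) Tr(B Bᵀ ∂ₓ² J) = -(λ/(2ψ)) Tr(B Bᵀ ∂ₓ² ψ), i.e., the terms quadratic in ∂ₓψ cancel exactly. -/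
/-! With `J = a log ψ` one has `∂J = (a/ψ) ∂ψ` and `∂²J = (a/ψ) ∂²ψ - (a/ψ²) ∂ψ ∂ψᵀ`.
For `a = -λ` the rank-one part of the Hessian contributes `(λ²/2ψ²) (∂ψ)ᵀ M ∂ψ` to
`(1/2) Tr(B Bᵀ ∂²J)` once `B Bᵀ = λ M` with `M = U R⁻¹ Uᵀ`, and this is exactly minus the
quadratic form `(1/2) (∂J)ᵀ M ∂J = (λ²/2ψ²) (∂ψ)ᵀ M ∂ψ`. -/

open Matrix

section LogTransform

variable {E : Type*} [NormedAddCommGroup E] [NormedSpace ℝ E] {f : E → ℝ} {x : E}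

theorem HasFDerivAt.const_mul_log {f' : E →L[ℝ] ℝ} (a : ℝ) (hf : HasFDerivAt f f' x)
    (hx : f x ≠ 0) : HasFDerivAt (fun y => a * Real.log (f y)) ((a * (f x)⁻¹) • f') x := by
  simpa only [smul_smul] using (hf.log hx).const_mul a

theorem fderiv_const_mul_log_apply (a : ℝ) (hf : DifferentiableAt ℝ f x) (hx : f x ≠ 0)
    (v : E) :
    fderiv ℝ (fun y => a * Real.log (f y)) x v = a * (f x)⁻¹ * fderiv ℝ f x v := by
  rw [(hf.hasFDerivAt.const_mul_log a hx).fderiv, _root_.smul_apply, smul_eq_mul]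

theorem fderiv_fderiv_const_mul_log_apply (a : ℝ) (hf : ContDiff ℝ 2 f) (hne : ∀ y, f y ≠ 0)
    (u v : E) :
    fderiv ℝ (fun y => fderiv ℝ (fun z => a * Real.log (f z)) y v) x u
      = a * (f x)⁻¹ * fderiv ℝ (fun y => fderiv ℝ f y v) x u
        - a * ((f x) ^ 2)⁻¹ * (fderiv ℝ f x u * fderiv ℝ f x v) := by
  have hdf : Differentiable ℝ f := hf.differentiable (by norm_num)
  have hdf' : DifferentiableAt ℝ (fun y => fderiv ℝ f y v) x :=
    ((hf.fderiv_right (le_refl _)).clm_apply contDiff_const).differentiable one_ne_zero x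
  have hcoef : HasFDerivAt (fun y => a * (f y)⁻¹) (a • (-((f x) ^ 2)⁻¹) • fderiv ℝ f x) x :=
    ((hasDerivAt_inv (hne x)).comp_hasFDerivAt x (hdf x).hasFDerivAt).const_mul a
  have hprod : HasFDerivAt (fun y => a * (f y)⁻¹ * fderiv ℝ f y v) _ x :=
    hcoef.mul hdf'.hasFDerivAt
  simp_rw [fderiv_const_mul_log_apply a (hdf _) (hne _)]
  rw [hprod.fderiv]
  simp only [_root_.add_apply, _root_.smul_apply, smul_eq_mul]
  ring

end LogTransform

theorem quadratic_terms_cancel_general {n m k : ℕ} (lam : ℝ)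
    (B : Matrix (Fin n) (Fin k) ℝ) (U : Matrix (Fin n) (Fin m) ℝ)
    (R : Matrix (Fin m) (Fin m) ℝ)
    (hBU : B * B.transpose = lam • (U * R⁻¹ * U.transpose))
    (ψ : (Fin n → ℝ) → ℝ) (hψ : ContDiff ℝ 2 ψ) (hpos : ∀ x, 0 < ψ x)
    (J : (Fin n → ℝ) → ℝ) (hJ : J = fun x => -lam * Real.log (ψ x))
    (x : Fin n → ℝ)
    (gradJ gradψ : Fin n → ℝ)
    (hgJ : gradJ = fun i => fderiv ℝ J x (Pi.single i 1))
    (hgψ : gradψ = fun i => fderiv ℝ ψ x (Pi.single i 1))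
    (hessJ hessψ : Matrix (Fin n) (Fin n) ℝ)
    (hhJ : hessJ = fun i j => fderiv ℝ (fun y => fderiv ℝ J y (Pi.single j 1)) x (Pi.single i 1))
    (hhψ : hessψ = fun i j => fderiv ℝ (fun y => fderiv ℝ ψ y (Pi.single j 1)) x (Pi.single i 1)) :
    -(1/2) * (gradJ ⬝ᵥ (U * R⁻¹ * U.transpose).mulVec gradJ)
      + (1/2) * Matrix.trace (B * B.transpose * hessJ)
    = -(lam / (2 * ψ x)) * Matrix.trace (B * B.transpose * hessψ) := by
  have hne : ∀ y, ψ y ≠ 0 := fun y => (hpos y).ne'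
  have hgrad : gradJ = (-lam * (ψ x)⁻¹) • gradψ := by
    ext i
    simp only [hgJ, hgψ, hJ, Pi.smul_apply, smul_eq_mul]
    exact fderiv_const_mul_log_apply _ (hψ.differentiable (by norm_num) x) (hne x) _
  have hhess :
      hessJ = (-lam * (ψ x)⁻¹) • hessψ + (lam * ((ψ x) ^ 2)⁻¹) • vecMulVec gradψ gradψ := by
    ext i j
    rw [Matrix.add_apply, Matrix.smul_apply, Matrix.smul_apply, vecMulVec_apply, hhJ, hhψ, hgψ,
      hJ, smul_eq_mul, smul_eq_mul]
    beta_reduce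
    rw [fderiv_fderiv_const_mul_log_apply _ hψ hne]
    ring
  set M := U * R⁻¹ * U.transpose
  rw [hBU, hgrad, hhess, Matrix.smul_mul, Matrix.smul_mul, Matrix.mul_add, Matrix.mul_smul,
    Matrix.mul_smul, mul_vecMulVec, trace_smul, trace_smul, trace_add, trace_smul, trace_smul,
    trace_vecMulVec, dotProduct_comm (M *ᵥ gradψ), mulVec_smul, smul_dotProduct, dotProduct_smul]
  simp only [smul_eq_mul]
  field_simp [hne x]
  ring

/-- Under Kappen's compatibility condition `B Bᵀ = λ U R⁻¹ Uᵀ`, the terms quadratic in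
`∂ₓψ` cancel:
`-(1/2)(∂ₓJ)ᵀ U R⁻¹ Uᵀ (∂ₓJ) + (1/2) Tr(B Bᵀ ∂ₓ²J) = -(λ/(2ψ)) Tr(B Bᵀ ∂ₓ²ψ)`. -/
theorem quadratic_terms_cancel {n m k : ℕ} (lam : ℝ) (hlam : 0 < lam)
    (B : Matrix (Fin n) (Fin k) ℝ) (U : Matrix (Fin n) (Fin m) ℝ)
    (R : Matrix (Fin m) (Fin m) ℝ) (hR : R.PosDef)
    (hBU : B * B.transpose = lam • (U * R⁻¹ * U.transpose))
    (ψ : (Fin n → ℝ) → ℝ) (hψ : ContDiff ℝ 2 ψ) (hpos : ∀ x, 0 < ψ x)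
    (J : (Fin n → ℝ) → ℝ) (hJ : J = fun x => -lam * Real.log (ψ x))
    (x : Fin n → ℝ)
    (gradJ gradψ : Fin n → ℝ)
    (hgJ : gradJ = fun i => fderiv ℝ J x (Pi.single i 1))
    (hgψ : gradψ = fun i => fderiv ℝ ψ x (Pi.single i 1))
    (hessJ hessψ : Matrix (Fin n) (Fin n) ℝ)
    (hhJ : hessJ = fun i j => fderiv ℝ (fun y => fderiv ℝ J y (Pi.single j 1)) x (Pi.single i 1))
    (hhψ : hessψ = fun i j => fderiv ℝ (fun y => fderiv ℝ ψ y (Pi.single j 1)) x (Pi.single i 1)) :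
    -(1/2) * (gradJ ⬝ᵥ (U * R⁻¹ * U.transpose).mulVec gradJ)
      + (1/2) * Matrix.trace (B * B.transpose * hessJ)
    = -(lam / (2 * ψ x)) * Matrix.trace (B * B.transpose * hessψ) :=
  quadratic_terms_cancel_general lam B U R hBU ψ hψ hpos J hJ x gradJ gradψ hgJ hgψ hessJ hessψ hhJ
    hhψ
end

section
/- Let λ > 0, B, U, R as above with B Bᵀ = λ U R⁻¹ Uᵀ, let a : ℝ^n × ℝ → ℝ^n and V : ℝ^n × ℝ → ℝ be continuous, and let ψ : ℝ^n × ℝ → ℝ be C^{2,1} and positive. Then J = -λ log ψ satisfies the HJB equation -∂ₜJ = -(1/2)(∂ₓJ)ᵀ U R⁻¹ Uᵀ ∂ₓJ + V + aᵀ ∂ₓJ + (1/2)Tr(B Bᵀ ∂ₓ²J) if and only if ψ satisfies the linear equation ∂ₜψ = -(-(V/λ) ψ + aᵀ ∂ₓψ + (1/2)Tr(B Bᵀ ∂ₓ²ψ)). -/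
/-!
With `J = -λ log ψ` one has `∂ₓJ = -(λ/ψ) ∂ₓψ` and
`∂ₓ²J = -(λ/ψ) ∂ₓ²ψ + (λ/ψ²) ∂ₓψ ∂ₓψᵀ`. Under `B Bᵀ = λ U R⁻¹ Uᵀ` the rank-one part of the
diffusion term contributes `(λ²/2ψ²) ∂ₓψᵀ U R⁻¹ Uᵀ ∂ₓψ`, which cancels the quadratic control
term exactly. The right-hand side of the HJB equation thus becomes
`V - (λ/ψ) (aᵀ∂ₓψ + ½ Tr(BBᵀ∂ₓ²ψ))`, while `-∂ₜJ = (λ/ψ) ∂ₜψ`; multiplying by `ψ/λ` gives the linear equation.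
-/

open Matrix Real

theorem deriv_const_mul_log {f : ℝ → ℝ} {t : ℝ} (c : ℝ) (hf : DifferentiableAt ℝ f t)
    (ht : f t ≠ 0) : deriv (fun s => c * log (f s)) t = c * (deriv f t / f t) :=
  ((hf.hasDerivAt.log ht).const_mul c).deriv

section Calculus

variable {E : Type*} [NormedAddCommGroup E] [NormedSpace ℝ E] {g : E → ℝ} (c : ℝ)

theorem fderiv_const_mul_log {y : E} (hg : DifferentiableAt ℝ g y) (hy : g y ≠ 0) :
    fderiv ℝ (fun y => c * log (g y)) y = (c / g y) • fderiv ℝ g y := by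
  rw [fderiv_const_mul (hg.log hy), fderiv.log hg hy, smul_smul, div_eq_mul_inv]

theorem fderiv_fderiv_const_mul_log_apply_s3 (hg : ContDiff ℝ 2 g) (hne : ∀ y, g y ≠ 0)
    (x v w : E) :
    fderiv ℝ (fun y => fderiv ℝ (fun y' => c * log (g y')) y v) x w
      = c / g x * fderiv ℝ (fun y => fderiv ℝ g y v) x w
        - c / g x ^ 2 * (fderiv ℝ g x v * fderiv ℝ g x w) := by
  have hdiff : Differentiable ℝ g := hg.differentiable two_ne_zero
  have hdg : Differentiable ℝ (fun y => fderiv ℝ g y v) :=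
    ((hg.fderiv_right (by norm_num : (1 : WithTop ℕ∞) + 1 ≤ 2)).differentiable one_ne_zero).clm_apply
      (differentiable_const v)
  have hslope : (fun y => fderiv ℝ (fun y' => c * log (g y')) y v)
      = fun y => c * (g y)⁻¹ * fderiv ℝ g y v := by
    funext y
    rw [fderiv_const_mul_log c (hdiff y) (hne y)]
    simp only [_root_.smul_apply, smul_eq_mul, div_eq_mul_inv]
  have hinv : HasFDerivAt (fun y => (g y)⁻¹) (-(g x ^ 2)⁻¹ • fderiv ℝ g x) x :=
    (hasDerivAt_inv (hne x)).comp_hasFDerivAt x (hdiff x).hasFDerivAt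
  have hprod : HasFDerivAt (fun y => c * (g y)⁻¹ * fderiv ℝ g y v) _ x :=
    (hinv.const_mul c).mul (hdg x).hasFDerivAt
  rw [hslope, hprod.fderiv]
  simp only [_root_.add_apply, _root_.smul_apply, smul_eq_mul]
  field_simp
  ring

end Calculus

section Coordinates

variable {ι : Type*} [Fintype ι] [DecidableEq ι]

noncomputable def coordGrad (f : (ι → ℝ) → ℝ) (x : ι → ℝ) : ι → ℝ :=
  fun i => fderiv ℝ f x (Pi.single i 1)

noncomputable def coordHessian (f : (ι → ℝ) → ℝ) (x : ι → ℝ) : Matrix ι ι ℝ :=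
  Matrix.of fun i j => fderiv ℝ (fun y => fderiv ℝ f y (Pi.single j 1)) x (Pi.single i 1)

variable {g : (ι → ℝ) → ℝ} (c : ℝ) {x : ι → ℝ}

theorem coordGrad_const_mul_log (hg : DifferentiableAt ℝ g x) (hx : g x ≠ 0) :
    coordGrad (fun y => c * log (g y)) x = (c / g x) • coordGrad g x := by
  ext i
  simp only [coordGrad, fderiv_const_mul_log c hg hx, _root_.smul_apply, Pi.smul_apply]

theorem coordHessian_const_mul_log (hg : ContDiff ℝ 2 g) (hne : ∀ y, g y ≠ 0) :
    coordHessian (fun y => c * log (g y)) x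
      = (c / g x) • coordHessian g x
        - (c / g x ^ 2) • vecMulVec (coordGrad g x) (coordGrad g x) := by
  ext i j
  simp only [coordHessian, coordGrad, of_apply, fderiv_fderiv_const_mul_log_apply_s3 c hg hne,
    Matrix.sub_apply, Matrix.smul_apply, vecMulVec_apply, smul_eq_mul]
  ring

end Coordinates

theorem trace_mul_vecMulVec_self {ι : Type*} [Fintype ι] (S : Matrix ι ι ℝ) (p : ι → ℝ) :
    trace (S * vecMulVec p p) = p ⬝ᵥ S *ᵥ p := by
  rw [mul_vecMulVec, trace_vecMulVec, dotProduct_comm]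

theorem hjb_rhs_log_transform {ι : Type*} [Fintype ι] {lam : ℝ} {S Q : Matrix ι ι ℝ}
    (hS : S = lam • Q) (H : Matrix ι ι ℝ) (p b : ι → ℝ) (v c : ℝ) :
    -(1/2) * (((-lam / c) • p) ⬝ᵥ Q *ᵥ ((-lam / c) • p)) + v + b ⬝ᵥ ((-lam / c) • p)
      + 1/2 * trace (S * ((-lam / c) • H - (-lam / c ^ 2) • vecMulVec p p))
      = v - lam / c * (b ⬝ᵥ p + 1/2 * trace (S * H)) := by
  subst hS
  rw [Matrix.mul_sub, Matrix.mul_smul, Matrix.mul_smul, trace_sub, trace_smul, trace_smul,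
    trace_mul_vecMulVec_self]
  simp only [smul_mulVec, mulVec_smul, smul_dotProduct, dotProduct_smul, smul_eq_mul]
  ring

theorem hjb_iff_linear_at {ι : Type*} [Fintype ι] [DecidableEq ι] {lam : ℝ} {S Q : Matrix ι ι ℝ}
    (hlam : lam ≠ 0) (hS : S = lam • Q) {ψ : (ι → ℝ) → ℝ → ℝ} {x : ι → ℝ} {t : ℝ}
    (hx : ContDiff ℝ 2 fun y => ψ y t) (ht : DifferentiableAt ℝ (fun s => ψ x s) t)
    (hne : ∀ y, ψ y t ≠ 0) (v : ℝ) (b : ι → ℝ) :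
    -(deriv (fun s => -lam * log (ψ x s)) t)
        = -(1/2) * (coordGrad (fun y => -lam * log (ψ y t)) x
            ⬝ᵥ Q *ᵥ coordGrad (fun y => -lam * log (ψ y t)) x)
          + v + b ⬝ᵥ coordGrad (fun y => -lam * log (ψ y t)) x
          + 1/2 * trace (S * coordHessian (fun y => -lam * log (ψ y t)) x)
      ↔ deriv (fun s => ψ x s) t
        = -(-(v / lam) * ψ x t + b ⬝ᵥ coordGrad (fun y => ψ y t) x
            + 1/2 * trace (S * coordHessian (fun y => ψ y t) x)) := by
  rw [deriv_const_mul_log _ ht (hne x),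
    coordGrad_const_mul_log _ (hx.differentiable two_ne_zero x) (hne x),
    coordHessian_const_mul_log _ hx hne, hjb_rhs_log_transform hS]
  have hc := hne x
  constructor <;> intro h <;> field_simp at h ⊢ <;> linarith

theorem HJB_linearization_general {n m k : ℕ} (lam : ℝ) (hlam : 0 < lam)
    (B : Matrix (Fin n) (Fin k) ℝ) (U : Matrix (Fin n) (Fin m) ℝ)
    (R : Matrix (Fin m) (Fin m) ℝ)
    (hBU : B * B.transpose = lam • (U * R⁻¹ * U.transpose))
    (a : (Fin n → ℝ) → ℝ → (Fin n → ℝ))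
    (V : (Fin n → ℝ) → ℝ → ℝ)
    (ψ : (Fin n → ℝ) → ℝ → ℝ) (hψ : ContDiff ℝ 2 (fun p : (Fin n → ℝ) × ℝ => ψ p.1 p.2))
    (hpos : ∀ x t, 0 < ψ x t)
    (J : (Fin n → ℝ) → ℝ → ℝ) (hJ : J = fun x t => -lam * Real.log (ψ x t)) :
    (∀ (x : Fin n → ℝ) (t : ℝ),
      -(deriv (fun s => J x s) t)
        = -(1/2) * ((fun i => fderiv ℝ (fun y => J y t) x (Pi.single i 1)) ⬝ᵥ
              (U * R⁻¹ * U.transpose).mulVec (fun i => fderiv ℝ (fun y => J y t) x (Pi.single i 1)))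
          + V x t
          + (a x t ⬝ᵥ (fun i => fderiv ℝ (fun y => J y t) x (Pi.single i 1)))
          + (1/2) * Matrix.trace ((B * B.transpose) *
              Matrix.of (fun i j =>
                fderiv ℝ (fun y => fderiv ℝ (fun y' => J y' t) y (Pi.single j 1)) x (Pi.single i 1))))
    ↔ (∀ (x : Fin n → ℝ) (t : ℝ),
      deriv (fun s => ψ x s) t
        = -( -(V x t / lam) * ψ x t
            + (a x t ⬝ᵥ (fun i => fderiv ℝ (fun y => ψ y t) x (Pi.single i 1)))
            + (1/2) * Matrix.trace ((B * B.transpose) *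
                Matrix.of (fun i j =>
                  fderiv ℝ (fun y => fderiv ℝ (fun y' => ψ y' t) y (Pi.single j 1)) x (Pi.single i 1))))) := by
  subst hJ
  refine forall₂_congr fun x t => ?_
  have hslice : ContDiff ℝ 2 fun y => ψ y t := hψ.comp (contDiff_id.prodMk contDiff_const)
  have htime : DifferentiableAt ℝ (fun s => ψ x s) t :=
    (hψ.comp (contDiff_const.prodMk contDiff_id)).differentiable two_ne_zero t
  exact hjb_iff_linear_at hlam.ne' hBU hslice htime (fun y => (hpos y t).ne') (V x t) (a x t)

/-- Equivalence of the nonlinear stochastic HJB equation for `J = -λ log ψ` with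
the linear backward equation `∂ₜψ = -(-(V/λ)ψ + aᵀ∂ₓψ + (1/2)Tr(BBᵀ ∂ₓ²ψ))`,
under the compatibility condition `B Bᵀ = λ U R⁻¹ Uᵀ`. -/
theorem HJB_linearization {n m k : ℕ} (lam : ℝ) (hlam : 0 < lam)
    (B : Matrix (Fin n) (Fin k) ℝ) (U : Matrix (Fin n) (Fin m) ℝ)
    (R : Matrix (Fin m) (Fin m) ℝ) (hR : R.PosDef)
    (hBU : B * B.transpose = lam • (U * R⁻¹ * U.transpose))
    (a : (Fin n → ℝ) → ℝ → (Fin n → ℝ)) (ha : Continuous (fun p : (Fin n → ℝ) × ℝ => a p.1 p.2))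
    (V : (Fin n → ℝ) → ℝ → ℝ) (hV : Continuous (fun p : (Fin n → ℝ) × ℝ => V p.1 p.2))
    (ψ : (Fin n → ℝ) → ℝ → ℝ) (hψ : ContDiff ℝ 2 (fun p : (Fin n → ℝ) × ℝ => ψ p.1 p.2))
    (hpos : ∀ x t, 0 < ψ x t)
    (J : (Fin n → ℝ) → ℝ → ℝ) (hJ : J = fun x t => -lam * Real.log (ψ x t)) :
    (∀ (x : Fin n → ℝ) (t : ℝ),
      -(deriv (fun s => J x s) t)
        = -(1/2) * ((fun i => fderiv ℝ (fun y => J y t) x (Pi.single i 1)) ⬝ᵥ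
              (U * R⁻¹ * U.transpose).mulVec (fun i => fderiv ℝ (fun y => J y t) x (Pi.single i 1)))
          + V x t
          + (a x t ⬝ᵥ (fun i => fderiv ℝ (fun y => J y t) x (Pi.single i 1)))
          + (1/2) * Matrix.trace ((B * B.transpose) *
              Matrix.of (fun i j =>
                fderiv ℝ (fun y => fderiv ℝ (fun y' => J y' t) y (Pi.single j 1)) x (Pi.single i 1))))
    ↔ (∀ (x : Fin n → ℝ) (t : ℝ),
      deriv (fun s => ψ x s) t
        = -( -(V x t / lam) * ψ x t
            + (a x t ⬝ᵥ (fun i => fderiv ℝ (fun y => ψ y t) x (Pi.single i 1)))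
            + (1/2) * Matrix.trace ((B * B.transpose) *
                Matrix.of (fun i j =>
                  fderiv ℝ (fun y => fderiv ℝ (fun y' => ψ y' t) y (Pi.single j 1)) x (Pi.single i 1))))) :=
  HJB_linearization_general lam hlam B U R hBU a V ψ hψ hpos J hJ
end
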